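/- arXiv:2508.05603 — 2 statements merged into one kernel-verified Lean document; each statement's English description precedes it below -/
import Mathlib

section
/- Let X₁, X₂ ∈ ℝ^{Z_N} with all entries nonnegative, and define the zero-temperature maps T̃ and D̃ of the periodic Pitman transform. Then all entries of T̃(X₁,X₂) and of D̃(X₁,X₂) are nonnegative. -/
open Finset Real

variable {N : ℕ}

/-- Cyclic sum `Y_{[i,j]}` (closed-closed), going from `i` around to `j`. -/
noncomputable def cycCC [NeZero N] (Y : ZMod N → ℝ) (i j : ZMod N) : ℝ :=
  ∑ ℓ ∈ Finset.range ((j - i).val + 1), Y (i + ℓ)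

/-- Cyclic sum `Y_{(i,j]}` (open-closed), with `Y_{(i,i]} = 0`. -/
noncomputable def cycOC [NeZero N] (Y : ZMod N → ℝ) (i j : ZMod N) : ℝ :=
  ∑ ℓ ∈ Finset.range ((j - i).val), Y (i + 1 + ℓ)

/-- `Y_ℓ = X₂(ℓ+1) − X₁(ℓ)`. -/
noncomputable def Yv [NeZero N] (X₁ X₂ : ZMod N → ℝ) : ZMod N → ℝ :=
  fun ℓ => X₂ (ℓ + 1) - X₁ ℓ

/-- Positive-temperature periodic Pitman map `T`. -/
noncomputable def Tmap [NeZero N] (X₁ X₂ : ZMod N → ℝ) (i : ZMod N) : ℝ :=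
  X₁ (i - 1) + Real.log ((∑ j : ZMod N, Real.exp (cycCC (Yv X₁ X₂) (i - 1) j)) /
    (∑ j : ZMod N, Real.exp (cycCC (Yv X₁ X₂) i j)))

/-- Positive-temperature periodic Pitman map `D`. -/
noncomputable def Dmap [NeZero N] (X₁ X₂ : ZMod N → ℝ) (i : ZMod N) : ℝ :=
  X₂ (i + 1) + Real.log ((∑ j : ZMod N, Real.exp (cycOC (Yv X₁ X₂) i j)) /
    (∑ j : ZMod N, Real.exp (cycOC (Yv X₁ X₂) (i - 1) j)))

/-- Zero-temperature periodic Pitman map `T̃`. -/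
noncomputable def Tz [NeZero N] (X₁ X₂ : ZMod N → ℝ) (i : ZMod N) : ℝ :=
  X₁ (i - 1) + Finset.univ.sup' Finset.univ_nonempty (fun j => cycCC (Yv X₁ X₂) (i - 1) j)
    - Finset.univ.sup' Finset.univ_nonempty (fun j => cycCC (Yv X₁ X₂) i j)

/-- Zero-temperature periodic Pitman map `D̃`. -/
noncomputable def Dz [NeZero N] (X₁ X₂ : ZMod N → ℝ) (i : ZMod N) : ℝ :=
  X₂ (i + 1) + Finset.univ.sup' Finset.univ_nonempty (fun j => cycOC (Yv X₁ X₂) i j)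
    - Finset.univ.sup' Finset.univ_nonempty (fun j => cycOC (Yv X₁ X₂) (i - 1) j)

section Aux

lemma myVal_add_one [NeZero N] (a : ZMod N) (h : a ≠ -1) : (a + 1).val = a.val + 1 := by
  have hN := NeZero.pos N
  have h2 : a.val ≠ N - 1 := by
    intro he
    apply h
    have : a = ((N - 1 : ℕ) : ZMod N) := by rw [← he, ZMod.natCast_val, ZMod.cast_id]
    rw [this]
    push_cast [Nat.cast_sub hN]
    simp
  have h3 : a.val + 1 < N := by have := ZMod.val_lt a; omega
  calc (a + 1).val = ((a.val : ZMod N) + 1).val := by rw [ZMod.natCast_val, ZMod.cast_id]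
    _ = ((a.val + 1 : ℕ) : ZMod N).val := by push_cast; ring_nf
    _ = a.val + 1 := ZMod.val_natCast_of_lt h3

lemma myNegOneVal [NeZero N] : ((-1 : ZMod N)).val = N - 1 := by
  obtain ⟨m, rfl⟩ : ∃ m, N = m + 1 := ⟨N - 1, by have := NeZero.pos N; omega⟩
  simpa using ZMod.val_neg_one m

lemma mySumCycle [NeZero N] (Y : ZMod N → ℝ) (i : ZMod N) :
    ∑ ℓ ∈ Finset.range N, Y (i + ℓ) = ∑ k : ZMod N, Y k := by
  rw [Finset.sum_range fun ℓ => Y (i + ℓ)]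
  rw [← Equiv.sum_comp (Equiv.addLeft i) Y]
  have hinj : Function.Injective (fun ℓ : Fin N => ((ℓ : ℕ) : ZMod N)) := by
    intro a b hab
    have h2 := congrArg ZMod.val hab
    rw [ZMod.val_natCast_of_lt a.isLt, ZMod.val_natCast_of_lt b.isLt] at h2
    exact Fin.ext h2
  have hbij : Function.Bijective (fun ℓ : Fin N => ((ℓ : ℕ) : ZMod N)) :=
    (Fintype.bijective_iff_injective_and_card _).mpr ⟨hinj, by simp [ZMod.card]⟩
  exact Fintype.sum_bijective (fun ℓ : Fin N => ((ℓ : ℕ) : ZMod N)) hbij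
    (fun ℓ => Y (i + (ℓ : ℕ))) (fun k => Y (i + k)) (fun x => rfl)

lemma cycCC_full [NeZero N] (Y : ZMod N → ℝ) (i : ZMod N) :
    cycCC Y i (i - 1) = ∑ k : ZMod N, Y k := by
  have hN := NeZero.pos N
  have h : (i - 1 - i : ZMod N) = -1 := by ring
  rw [cycCC, h, myNegOneVal]
  have : N - 1 + 1 = N := by omega
  rw [this, mySumCycle]

lemma sub_ne_negone [NeZero N] {i j : ZMod N} (h : j ≠ i - 1) : (j - i : ZMod N) ≠ -1 := by
  intro he
  apply h
  have := congrArg (· + i) he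
  simpa [sub_add_cancel, sub_eq_add_neg, add_comm] using this

lemma cycCC_shift [NeZero N] (Y : ZMod N → ℝ) {i j : ZMod N} (h : j ≠ i - 1) :
    cycCC Y (i - 1) j = Y (i - 1) + cycCC Y i j := by
  have hv : (j - (i - 1)).val = (j - i).val + 1 := by
    have h1 : (j - (i - 1) : ZMod N) = (j - i) + 1 := by ring
    rw [h1, myVal_add_one _ (sub_ne_negone h)]
  rw [cycCC, cycCC, hv, Finset.sum_range_succ']
  have heq : ∀ ℓ : ℕ, Y (i - 1 + ((ℓ + 1 : ℕ) : ZMod N)) = Y (i + ℓ) := by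
    intro ℓ
    congr 1
    push_cast
    ring
  simp only [heq, Nat.cast_zero, add_zero]
  ring

lemma cycOC_shift [NeZero N] (Y : ZMod N → ℝ) {i j : ZMod N} (h : j ≠ i - 1) :
    cycOC Y (i - 1) j = Y i + cycOC Y i j := by
  have hv : (j - (i - 1)).val = (j - i).val + 1 := by
    have h1 : (j - (i - 1) : ZMod N) = (j - i) + 1 := by ring
    rw [h1, myVal_add_one _ (sub_ne_negone h)]
  rw [cycOC, cycOC, hv]
  have hb : (i - 1 + 1 : ZMod N) = i := by ring
  rw [hb, Finset.sum_range_succ']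
  have heq : ∀ ℓ : ℕ, Y (i + ((ℓ + 1 : ℕ) : ZMod N)) = Y (i + 1 + ℓ) := by
    intro ℓ
    congr 1
    push_cast
    ring
  simp only [heq, Nat.cast_zero, add_zero]
  ring

lemma cycOC_self [NeZero N] (Y : ZMod N → ℝ) (i : ZMod N) : cycOC Y i i = 0 := by
  simp [cycOC]

end Aux

/-- If `X₁, X₂` are entrywise nonnegative, so are `T̃(X₁,X₂)` and `D̃(X₁,X₂)`. -/
theorem Tz_nonneg_Dz_nonneg [NeZero N] (X₁ X₂ : ZMod N → ℝ)
    (h1 : ∀ i, 0 ≤ X₁ i) (h2 : ∀ i, 0 ≤ X₂ i) :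
    (∀ i, 0 ≤ Tz X₁ X₂ i) ∧ (∀ i, 0 ≤ Dz X₁ X₂ i) := by
  constructor
  · intro i
    rw [Tz]
    have key : Finset.univ.sup' Finset.univ_nonempty (fun j => cycCC (Yv X₁ X₂) i j)
        ≤ X₁ (i - 1) + Finset.univ.sup' Finset.univ_nonempty
          (fun j => cycCC (Yv X₁ X₂) (i - 1) j) := by
      apply Finset.sup'_le
      intro j _
      by_cases hj : j = i - 1
      · subst hj
        rw [cycCC_full]
        have h3 : cycCC (Yv X₁ X₂) (i - 1) (i - 1 - 1) = ∑ k : ZMod N, Yv X₁ X₂ k :=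
          cycCC_full _ _
        calc ∑ k : ZMod N, Yv X₁ X₂ k
            = cycCC (Yv X₁ X₂) (i - 1) (i - 1 - 1) := h3.symm
          _ ≤ Finset.univ.sup' Finset.univ_nonempty
              (fun j => cycCC (Yv X₁ X₂) (i - 1) j) :=
              Finset.le_sup' _ (Finset.mem_univ _)
          _ ≤ X₁ (i - 1) + _ := le_add_of_nonneg_left (h1 _)
      · have := cycCC_shift (Yv X₁ X₂) hj
        have hy : Yv X₁ X₂ (i - 1) = X₂ i - X₁ (i - 1) := by
          simp [Yv, sub_add_cancel]
        have hle : cycCC (Yv X₁ X₂) (i - 1) j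
            ≤ Finset.univ.sup' Finset.univ_nonempty
              (fun j => cycCC (Yv X₁ X₂) (i - 1) j) :=
          Finset.le_sup' _ (Finset.mem_univ j)
        have h2i := h2 i
        have : cycCC (Yv X₁ X₂) i j
            = cycCC (Yv X₁ X₂) (i - 1) j - X₂ i + X₁ (i - 1) := by
          rw [this, hy]; ring
        rw [this]
        linarith
    linarith
  · intro i
    rw [Dz]
    have key : Finset.univ.sup' Finset.univ_nonempty (fun j => cycOC (Yv X₁ X₂) (i - 1) j)
        ≤ X₂ (i + 1) + Finset.univ.sup' Finset.univ_nonempty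
          (fun j => cycOC (Yv X₁ X₂) i j) := by
      apply Finset.sup'_le
      intro j _
      by_cases hj : j = i - 1
      · subst hj
        rw [cycOC_self]
        have h0 : (0 : ℝ) = cycOC (Yv X₁ X₂) i i := (cycOC_self _ _).symm
        have hle : cycOC (Yv X₁ X₂) i i
            ≤ Finset.univ.sup' Finset.univ_nonempty (fun j => cycOC (Yv X₁ X₂) i j) :=
          Finset.le_sup' _ (Finset.mem_univ i)
        have := h2 (i + 1)
        linarith
      · have hsh := cycOC_shift (Yv X₁ X₂) hj
        have hy : Yv X₁ X₂ i = X₂ (i + 1) - X₁ i := rfl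
        have hle : cycOC (Yv X₁ X₂) i j
            ≤ Finset.univ.sup' Finset.univ_nonempty (fun j => cycOC (Yv X₁ X₂) i j) :=
          Finset.le_sup' _ (Finset.mem_univ j)
        have := h1 i
        rw [hsh, hy]
        linarith
    linarith
end

section
/- Let X₁, X₂ ∈ ℤ^{Z_N} be nonnegative integer vectors and let (U₁, U₂) = (T̃(X₂,X₁), D̃(X₂,X₁)) be their zero-temperature periodic Pitman transform. Then U₁ and U₂ are nonnegative integer vectors, and applying the transform again returns (X₁, X₂); that is, the zero-temperature periodic Pitman transform restricts to an involution on (ℤ_{≥0}^{Z_N})². -/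
open Finset Real

variable {N : ℕ}

/-!
Lift `Y = Yv A B` to `ℕ` through its partial sums `F n = Y 0 + ⋯ + Y (n - 1)` and let `H m` be the
maximum of `F` over the window `[m, m + N)`. Every cyclic maximum in `T̃` and `D̃` is a window
maximum of `F` shifted by a value of `F`, which gives `T̃(A,B)(n) = B n + H n - H (n + 1)` and
`D̃(A,B)(n) = A n + H (n + 1) - H n`. Integrality is then immediate, and nonnegativity holds
because sliding the window by one step adds or removes a single increment `B (ℓ + 1) - A ℓ` of `F`.

For the transformed pair the partial sums become `F - H - H (· + 1)` up to a constant. As `F` is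
quasi-periodic, `F (n + N) = F n + S`, the window maximum of `F - H - H (· + 1)` at `w` is exactly
`-(H w + S)`: the upper bound compares with the maximiser of the window at `w`, and the bound is
attained at a suitably chosen first or last point of that window. Substituting this into the
formulas for `T̃` and `D̃` returns `(A, B)`.
-/

noncomputable def windowMax (N : ℕ) [NeZero N] (F : ℕ → ℝ) (m : ℕ) : ℝ :=
  (range N).sup' (nonempty_range_iff.mpr (NeZero.ne N)) fun t => F (m + t)

section WindowMax

variable [NeZero N] {F : ℕ → ℝ} {S : ℝ}

theorem le_windowMax {m k : ℕ} (hmk : m ≤ k) (hkm : k < m + N) : F k ≤ windowMax N F m := by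
  obtain ⟨t, rfl⟩ := Nat.exists_eq_add_of_le hmk
  exact le_sup' (fun t => F (m + t)) (mem_range.mpr (by omega))

theorem windowMax_le {m : ℕ} {c : ℝ} (h : ∀ t < N, F (m + t) ≤ c) : windowMax N F m ≤ c :=
  sup'_le _ _ fun t ht => h t (mem_range.mp ht)

theorem exists_windowMax_eq (F : ℕ → ℝ) (m : ℕ) : ∃ t < N, windowMax N F m = F (m + t) := by
  obtain ⟨t, ht, h⟩ := exists_mem_eq_sup' (nonempty_range_iff.mpr (NeZero.ne N)) fun t => F (m + t)
  exact ⟨t, mem_range.mp ht, h⟩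

theorem windowMax_add_const (F : ℕ → ℝ) (c : ℝ) (m : ℕ) :
    windowMax N (fun n => F n + c) m = windowMax N F m + c :=
  (sup'_add _ _ _ _).symm

theorem windowMax_add_period (hF : ∀ n, F (n + N) = F n + S) (m : ℕ) :
    windowMax N F (m + N) = windowMax N F m + S := by
  rw [← windowMax_add_const]
  exact sup'_congr _ rfl fun t _ => by rw [add_right_comm, hF]

/-- The window at `w + t` consists of the entries of the window at `w` from `t` on, followed by
the translates by one period of its first `t` entries. -/
theorem windowMax_add_le (hF : ∀ n, F (n + N) = F n + S) {w t : ℕ} {c : ℝ}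
    (h₁ : ∀ k, t ≤ k → k < N → F (w + k) ≤ c) (h₂ : ∀ k < t, F (w + k) + S ≤ c) :
    windowMax N F (w + t) ≤ c := by
  refine windowMax_le fun k hk => ?_
  by_cases hkN : t + k < N
  · rw [add_assoc]
    exact h₁ _ (by omega) hkN
  · have h := h₂ (t + k - N) (by omega)
    rwa [← hF, show w + (t + k - N) + N = w + t + k by omega] at h

theorem sub_windowMax_sub_windowMax_succ_le (hF : ∀ n, F (n + N) = F n + S) (w : ℕ) {t : ℕ}
    (ht : t < N) :
    F (w + t) - windowMax N F (w + t) - windowMax N F (w + t + 1) ≤ -(windowMax N F w + S) := by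
  obtain ⟨s, hs, hmax⟩ := exists_windowMax_eq (N := N) F w
  rcases le_or_gt t s with hts | hst
  · have h₁ : F (w + s) ≤ windowMax N F (w + t) := le_windowMax (by omega) (by omega)
    have h₂ : F (w + t + N) ≤ windowMax N F (w + t + 1) := le_windowMax (by omega) (by omega)
    rw [hF] at h₂
    linarith
  · have h₁ : F (w + t) ≤ windowMax N F (w + t) := le_windowMax le_rfl (by omega)
    have h₂ : F (w + s + N) ≤ windowMax N F (w + t + 1) := le_windowMax (by omega) (by omega)
    rw [hF] at h₂
    linarith

/-- Witness: the last `t < N` with `windowMax N F w + S ≤ F (w + t)`. -/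
theorem exists_windowMax_add_windowMax_succ_le_of_nonpos (hF : ∀ n, F (n + N) = F n + S)
    (hS : S ≤ 0) (w : ℕ) : ∃ t < N,
      windowMax N F (w + t) + windowMax N F (w + t + 1) ≤ F (w + t) + (windowMax N F w + S) := by
  classical
  set P : ℕ → Prop := fun t => windowMax N F w + S ≤ F (w + t)
  obtain ⟨s, hs, hmax⟩ := exists_windowMax_eq (N := N) F w
  have hPs : P s := by simp only [P]; linarith
  set t := Nat.findGreatest P (N - 1)
  have htN : t < N := by have := Nat.findGreatest_le (P := P) (N - 1); omega
  have hPt : P t := Nat.findGreatest_spec (P := P) (m := s) (by omega) hPs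
  have hafter : ∀ k, t < k → k < N → F (w + k) < windowMax N F w + S := fun k hk hkN =>
    lt_of_not_ge (Nat.findGreatest_is_greatest hk (by omega))
  have hle : ∀ k < N, F (w + k) ≤ windowMax N F w := fun k hk => le_windowMax (by omega) (by omega)
  refine ⟨t, htN, add_le_add ?_ ?_⟩
  · refine windowMax_add_le hF (fun k hk hkN => ?_) (fun k hk => ?_)
    · rcases hk.eq_or_lt with rfl | hk
      · exact le_rfl
      · exact (hafter k hk hkN).le.trans hPt
    · linarith [hle k (by omega)]
  · rw [add_assoc]
    refine windowMax_add_le (w := w) hF (fun k hk hkN => (hafter k hk hkN).le) (fun k hk => ?_)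
    linarith [hle k (by omega)]

/-- Witness: the first `t` with `windowMax N F w ≤ F (w + t) + S`. -/
theorem exists_windowMax_add_windowMax_succ_le_of_nonneg (hF : ∀ n, F (n + N) = F n + S)
    (hS : 0 ≤ S) (w : ℕ) : ∃ t < N,
      windowMax N F (w + t) + windowMax N F (w + t + 1) ≤ F (w + t) + (windowMax N F w + S) := by
  classical
  obtain ⟨s, hs, hmax⟩ := exists_windowMax_eq (N := N) F w
  have hex : ∃ t, windowMax N F w ≤ F (w + t) + S := ⟨s, by linarith⟩
  set t := Nat.find hex
  have hPt : windowMax N F w ≤ F (w + t) + S := Nat.find_spec hex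
  have htN : t < N := 
    (Nat.find_min' hex (m := s) (by linarith)).trans_lt hs
  have hbefore : ∀ k < t, F (w + k) + S < windowMax N F w := fun k hk =>
    lt_of_not_ge (Nat.find_min hex hk)
  have hle : ∀ k < N, F (w + k) ≤ windowMax N F w := fun k hk => le_windowMax (by omega) (by omega)
  refine ⟨t, htN, ?_⟩
  have h₁ : windowMax N F (w + t) ≤ windowMax N F w :=
    windowMax_add_le hF (fun k _ hkN => hle k hkN) (fun k hk => (hbefore k hk).le)
  have h₂ : windowMax N F (w + t + 1) ≤ F (w + t) + S := by
    rw [add_assoc]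
    refine windowMax_add_le (w := w) hF (fun k _ hkN => (hle k hkN).trans hPt) (fun k hk => ?_)
    rcases (Nat.lt_succ_iff.mp hk).eq_or_lt with rfl | hk
    · exact le_rfl
    · exact (hbefore k hk).le.trans hPt
  linarith

theorem windowMax_sub_windowMax_sub_windowMax_succ (hF : ∀ n, F (n + N) = F n + S) (w : ℕ) :
    windowMax N (fun u => F u - windowMax N F u - windowMax N F (u + 1)) w
      = -(windowMax N F w + S) := by
  refine le_antisymm (windowMax_le fun t ht => sub_windowMax_sub_windowMax_succ_le hF w ht) ?_
  obtain ⟨t, ht, h⟩ := (le_total S 0).elim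
    (exists_windowMax_add_windowMax_succ_le_of_nonpos hF · w)
    (exists_windowMax_add_windowMax_succ_le_of_nonneg hF · w)
  have := le_windowMax (F := fun u => F u - windowMax N F u - windowMax N F (u + 1))
    (N := N) (m := w) (k := w + t) (by omega) (by omega)
  linarith

end WindowMax

noncomputable def partialSum (Z : ZMod N → ℝ) (n : ℕ) : ℝ :=
  ∑ t ∈ range n, Z t

theorem partialSum_succ (Z : ZMod N → ℝ) (n : ℕ) :
    partialSum Z (n + 1) = partialSum Z n + Z n :=
  sum_range_succ _ _

theorem partialSum_add (Z : ZMod N → ℝ) (a v : ℕ) :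
    partialSum Z (a + v) = partialSum Z a + ∑ ℓ ∈ range v, Z (a + ℓ) := by
  rw [partialSum, sum_range_add]
  push_cast
  rfl

section PartialSum

variable [NeZero N]

theorem sum_range_natCast_eq_sum_univ {M : Type*} [AddCommMonoid M] (f : ZMod N → M) :
    ∑ ℓ ∈ range N, f ℓ = ∑ j, f j :=
  sum_nbij' (↑) ZMod.val (fun _ _ => mem_univ _) (fun j _ => mem_range.mpr (ZMod.val_lt j))
    (fun _ hℓ => ZMod.val_cast_of_lt (mem_range.mp hℓ)) (fun j _ => ZMod.natCast_zmod_val j)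
    fun _ _ => rfl

theorem partialSum_add_period (Z : ZMod N → ℝ) (n : ℕ) :
    partialSum Z (n + N) = partialSum Z n + ∑ j, Z j := by
  rw [partialSum_add, sum_range_natCast_eq_sum_univ (fun j : ZMod N => Z (n + j))]
  exact congrArg _ (Equiv.sum_comp (Equiv.addLeft (n : ZMod N)) Z)

theorem sup'_univ_val_sub (i : ZMod N) (f : ℕ → ℝ) :
    univ.sup' univ_nonempty (fun j : ZMod N => f (j - i).val)
      = (range N).sup' (nonempty_range_iff.mpr (NeZero.ne N)) f := by
  refine le_antisymm (sup'_le _ _ fun j _ => le_sup' f (mem_range.mpr (ZMod.val_lt _)))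
    (sup'_le _ _ fun t ht => ?_)
  have h := le_sup' (fun j : ZMod N => f (j - i).val) (mem_univ (i + t))
  rwa [add_sub_cancel_left, ZMod.val_cast_of_lt (mem_range.mp ht)] at h

theorem cycCC_eq_add_cycOC (Z : ZMod N → ℝ) (i j : ZMod N) :
    cycCC Z i j = Z i + cycOC Z i j := by
  rw [cycCC, cycOC, sum_range_succ', add_comm]
  push_cast
  simp only [add_zero]
  exact congrArg _ (sum_congr rfl fun ℓ _ => by rw [add_comm (ℓ : ZMod N), add_assoc])

theorem cycOC_natCast (Z : ZMod N → ℝ) (n : ℕ) (j : ZMod N) :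
    cycOC Z n j = partialSum Z (n + 1 + (j - n).val) - partialSum Z (n + 1) := by
  rw [partialSum_add, cycOC]
  push_cast
  ring

theorem sup'_cycOC_natCast (Z : ZMod N → ℝ) (n : ℕ) :
    univ.sup' univ_nonempty (fun j => cycOC Z n j)
      = windowMax N (partialSum Z) (n + 1) - partialSum Z (n + 1) := by
  simp_rw [cycOC_natCast, sub_eq_add_neg (G := ℝ), ← sup'_add]
  rw [sup'_univ_val_sub (n : ZMod N) fun t => partialSum Z (n + 1 + t)]
  rfl

theorem sup'_cycCC_natCast (Z : ZMod N → ℝ) (n : ℕ) :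
    univ.sup' univ_nonempty (fun j => cycCC Z n j)
      = windowMax N (partialSum Z) (n + 1) - partialSum Z n := by
  simp_rw [cycCC_eq_add_cycOC, ← add_sup', sup'_cycOC_natCast, partialSum_succ]
  ring

end PartialSum

section Pitman

variable [NeZero N] (A B : ZMod N → ℝ)

theorem Tz_natCast_succ (n : ℕ) :
    Tz A B (n + 1 : ℕ) = B (n + 1 : ℕ) + windowMax N (partialSum (Yv A B)) (n + 1)
      - windowMax N (partialSum (Yv A B)) (n + 2) := by
  have hi : ((n + 1 : ℕ) : ZMod N) - 1 = n := by push_cast; ring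
  rw [Tz, hi, sup'_cycCC_natCast, sup'_cycCC_natCast, partialSum_succ _ n, Yv]
  push_cast
  ring

theorem Dz_natCast_succ (n : ℕ) :
    Dz A B (n + 1 : ℕ) = A (n + 1 : ℕ) + windowMax N (partialSum (Yv A B)) (n + 2)
      - windowMax N (partialSum (Yv A B)) (n + 1) := by
  have hi : ((n + 1 : ℕ) : ZMod N) - 1 = n := by push_cast; ring
  rw [Dz, hi, sup'_cycOC_natCast, sup'_cycOC_natCast, partialSum_succ _ (n + 1), Yv]
  push_cast
  ring

theorem natCast_add_pred_succ (n : ℕ) : ((n + (N - 1) + 1 : ℕ) : ZMod N) = n := by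
  rw [add_assoc, Nat.sub_add_cancel (NeZero.one_le), Nat.cast_add, ZMod.natCast_self, add_zero]

theorem Tz_natCast (n : ℕ) :
    Tz A B n = B n + windowMax N (partialSum (Yv A B)) n
      - windowMax N (partialSum (Yv A B)) (n + 1) := by
  have hN : 1 ≤ N := NeZero.one_le
  have h := Tz_natCast_succ A B (n + (N - 1))
  have hF := partialSum_add_period (Yv A B)
  rw [natCast_add_pred_succ, show n + (N - 1) + 1 = n + N by omega,
    show n + (N - 1) + 2 = n + 1 + N by omega, windowMax_add_period hF,
    windowMax_add_period hF] at h
  rw [h]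
  ring

theorem Dz_natCast (n : ℕ) :
    Dz A B n = A n + windowMax N (partialSum (Yv A B)) (n + 1)
      - windowMax N (partialSum (Yv A B)) n := by
  have hN : 1 ≤ N := NeZero.one_le
  have h := Dz_natCast_succ A B (n + (N - 1))
  have hF := partialSum_add_period (Yv A B)
  rw [natCast_add_pred_succ, show n + (N - 1) + 1 = n + N by omega,
    show n + (N - 1) + 2 = n + 1 + N by omega, windowMax_add_period hF,
    windowMax_add_period hF] at h
  rw [h]
  ring

theorem Yv_Dz_Tz_natCast (n : ℕ) :
    Yv (Dz A B) (Tz A B) n = Yv A B n + windowMax N (partialSum (Yv A B)) n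
      - windowMax N (partialSum (Yv A B)) (n + 2) := by
  have h := Tz_natCast_succ A B n
  push_cast at h
  rw [Yv, Yv, h, Dz_natCast]
  ring

theorem partialSum_Yv_Dz_Tz (u : ℕ) :
    partialSum (Yv (Dz A B) (Tz A B)) u
      = partialSum (Yv A B) u - windowMax N (partialSum (Yv A B)) u
          - windowMax N (partialSum (Yv A B)) (u + 1)
        + (windowMax N (partialSum (Yv A B)) 0 + windowMax N (partialSum (Yv A B)) 1) := by
  have htel (H : ℕ → ℝ) :
      ∑ t ∈ range u, (H t - H (t + 2)) = H 0 + H 1 - (H u + H (u + 1)) := by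
    rw [← sum_range_sub' (fun t => H t + H (t + 1)) u]
    exact sum_congr rfl fun t _ => by ring
  simp only [partialSum, Yv_Dz_Tz_natCast, add_sub_assoc, sum_add_distrib, htel]
  ring

theorem windowMax_partialSum_Yv_Dz_Tz (m : ℕ) :
    windowMax N (partialSum (Yv (Dz A B) (Tz A B))) m
      = -(windowMax N (partialSum (Yv A B)) m + ∑ j, Yv A B j)
        + (windowMax N (partialSum (Yv A B)) 0 + windowMax N (partialSum (Yv A B)) 1) := by
  rw [funext (partialSum_Yv_Dz_Tz A B), windowMax_add_const,
    windowMax_sub_windowMax_sub_windowMax_succ (partialSum_add_period _)]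

theorem Tz_Dz_Tz : Tz (Dz A B) (Tz A B) = B := by
  funext i
  rw [← ZMod.natCast_zmod_val i, Tz_natCast, Tz_natCast, windowMax_partialSum_Yv_Dz_Tz,
    windowMax_partialSum_Yv_Dz_Tz]
  ring

theorem Dz_Dz_Tz : Dz (Dz A B) (Tz A B) = A := by
  funext i
  rw [← ZMod.natCast_zmod_val i, Dz_natCast, Dz_natCast, windowMax_partialSum_Yv_Dz_Tz,
    windowMax_partialSum_Yv_Dz_Tz]
  ring

end Pitman

section Values

variable [NeZero N] {A B : ZMod N → ℝ}

theorem windowMax_partialSum_mem {Z : ZMod N → ℝ} {R : AddSubgroup ℝ} (hZ : ∀ ℓ, Z ℓ ∈ R)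
    (m : ℕ) : windowMax N (partialSum Z) m ∈ R := by
  obtain ⟨t, -, h⟩ := exists_windowMax_eq (N := N) (partialSum Z) m
  rw [h]
  exact R.sum_mem fun ℓ _ => hZ ℓ

theorem Tz_mem {R : AddSubgroup ℝ} (hA : ∀ ℓ, A ℓ ∈ R) (hB : ∀ ℓ, B ℓ ∈ R) (i : ZMod N) :
    Tz A B i ∈ R := by
  have hZ : ∀ ℓ, Yv A B ℓ ∈ R := fun ℓ => R.sub_mem (hB _) (hA _)
  rw [← ZMod.natCast_zmod_val i, Tz_natCast]
  exact R.sub_mem (R.add_mem (hB _) (windowMax_partialSum_mem hZ _))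
    (windowMax_partialSum_mem hZ _)

theorem Dz_mem {R : AddSubgroup ℝ} (hA : ∀ ℓ, A ℓ ∈ R) (hB : ∀ ℓ, B ℓ ∈ R) (i : ZMod N) :
    Dz A B i ∈ R := by
  have hZ : ∀ ℓ, Yv A B ℓ ∈ R := fun ℓ => R.sub_mem (hB _) (hA _)
  rw [← ZMod.natCast_zmod_val i, Dz_natCast]
  exact R.sub_mem (R.add_mem (hA _) (windowMax_partialSum_mem hZ _))
    (windowMax_partialSum_mem hZ _)

theorem Tz_nonneg (hA : ∀ ℓ, 0 ≤ A ℓ) (hB : ∀ ℓ, 0 ≤ B ℓ) (i : ZMod N) : 0 ≤ Tz A B i := by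
  have hN : 1 ≤ N := NeZero.one_le
  have hF := partialSum_add_period (Yv A B)
  obtain ⟨n, rfl⟩ : ∃ n : ℕ, ((n + 1 : ℕ) : ZMod N) = i :=
    ⟨(i - 1).val, by push_cast [ZMod.natCast_zmod_val]; ring⟩
  have hlast : partialSum (Yv A B) (n + 1 + N)
      ≤ windowMax N (partialSum (Yv A B)) (n + 1) + B (n + 1 : ℕ) := by
    have hle : partialSum (Yv A B) (n + N) ≤ windowMax N (partialSum (Yv A B)) (n + 1) :=
      le_windowMax (by omega) (by omega)
    have hcast : ((n + N : ℕ) : ZMod N) + 1 = (n + 1 : ℕ) := by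
      push_cast [ZMod.natCast_self]; ring
    rw [show n + 1 + N = n + N + 1 by omega, partialSum_succ, Yv, hcast]
    linarith [hA (n + N : ℕ)]
  have hwin : windowMax N (partialSum (Yv A B)) (n + 1 + 1)
      ≤ windowMax N (partialSum (Yv A B)) (n + 1) + B (n + 1 : ℕ) := by
    refine windowMax_add_le hF (fun k _ hkN => ?_) (fun k hk => ?_)
    · linarith [hB (n + 1 : ℕ), le_windowMax (N := N) (F := partialSum (Yv A B)) (m := n + 1)
        (k := n + 1 + k) (by omega) (by omega)]
    · rw [Nat.lt_one_iff.mp hk, add_zero, ← hF]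
      exact hlast
  rw [Tz_natCast_succ]
  linarith

theorem Dz_nonneg (hA : ∀ ℓ, 0 ≤ A ℓ) (hB : ∀ ℓ, 0 ≤ B ℓ) (i : ZMod N) : 0 ≤ Dz A B i := by
  rw [← ZMod.natCast_zmod_val i, Dz_natCast]
  have hwin : windowMax N (partialSum (Yv A B)) i.val
      ≤ windowMax N (partialSum (Yv A B)) (i.val + 1) + A i.val := by
    refine windowMax_le fun k hk => ?_
    rcases Nat.eq_zero_or_pos k with rfl | hk0
    · have hfirst : partialSum (Yv A B) (i.val + 1)
          ≤ windowMax N (partialSum (Yv A B)) (i.val + 1) := le_windowMax le_rfl (by omega)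
      rw [partialSum_succ, Yv] at hfirst
      rw [add_zero]
      linarith [hB (i.val + 1)]
    · linarith [hA i.val, le_windowMax (N := N) (F := partialSum (Yv A B)) (m := i.val + 1)
        (k := i.val + k) (by omega) (by omega)]
  linarith

end Values

theorem exists_natCast_eq_of_mem_range_intCast {x : ℝ} (hx : x ∈ (Int.castAddHom ℝ).range)
    (h0 : 0 ≤ x) : ∃ n : ℕ, x = n := by
  obtain ⟨z, rfl⟩ := hx
  lift z to ℕ using by simpa using h0
  exact ⟨z, by simp⟩

/-- The zero-temperature periodic Pitman transform
`(X₁,X₂) ↦ (T̃(X₂,X₁), D̃(X₂,X₁))` restricts to an involution on pairs of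
nonnegative integer vectors. -/
theorem zero_temp_pitman_involution_nonneg_int [NeZero N] (X₁ X₂ : ZMod N → ℕ) :
    (∀ i, ∃ n : ℕ, Tz (fun ℓ => (X₂ ℓ : ℝ)) (fun ℓ => (X₁ ℓ : ℝ)) i = n) ∧
    (∀ i, ∃ n : ℕ, Dz (fun ℓ => (X₂ ℓ : ℝ)) (fun ℓ => (X₁ ℓ : ℝ)) i = n) ∧
    Tz (Dz (fun ℓ => (X₂ ℓ : ℝ)) (fun ℓ => (X₁ ℓ : ℝ)))
       (Tz (fun ℓ => (X₂ ℓ : ℝ)) (fun ℓ => (X₁ ℓ : ℝ))) = (fun ℓ => (X₁ ℓ : ℝ)) ∧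
    Dz (Dz (fun ℓ => (X₂ ℓ : ℝ)) (fun ℓ => (X₁ ℓ : ℝ)))
       (Tz (fun ℓ => (X₂ ℓ : ℝ)) (fun ℓ => (X₁ ℓ : ℝ))) = (fun ℓ => (X₂ ℓ : ℝ)) := by
  have hint (X : ZMod N → ℕ) (ℓ : ZMod N) : (X ℓ : ℝ) ∈ (Int.castAddHom ℝ).range :=
    ⟨X ℓ, by simp⟩
  have hnonneg (X : ZMod N → ℕ) (ℓ : ZMod N) : 0 ≤ (X ℓ : ℝ) := Nat.cast_nonneg _
  refine ⟨fun i => ?_, fun i => ?_, Tz_Dz_Tz _ _, Dz_Dz_Tz _ _⟩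
  · exact exists_natCast_eq_of_mem_range_intCast (Tz_mem (hint X₂) (hint X₁) i)
      (Tz_nonneg (hnonneg X₂) (hnonneg X₁) i)
  · exact exists_natCast_eq_of_mem_range_intCast (Dz_mem (hint X₂) (hint X₁) i)
      (Dz_nonneg (hnonneg X₂) (hnonneg X₁) i)
end
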